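/- The deformed daggers on two-tensors are intertwined by T_θ: writing †_{1⊗1} for the dagger on Ω¹_θ ⊗_θ Ω¹_θ given by (ω ⊗_θ η)† = η† ⊗_θ ω† with ω† = λ^{n₁(ω)n₂(ω)}ω*, and †_{2,θ}(ω⊗η) := λ^{(n₂(ω)+n₂(η))(n₁(ω)+n₁(η))} η*⊗ω* on (Ω¹⊗Ω¹)_θ, one has †_{1⊗_θ1} = T_θ ∘ †_{2,θ} ∘ T_θ^{−1}. -/

import Mathlib

/-!
On generators both sides are a multiple of `η* ⊗_θ ω*` by a power of `λ`. Since `|λ| = 1`,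
the antilinearity of `†_{1⊗_θ1}` turns the factor `λ^{-n₂(ω)n₁(η)}` of `T_θ` into
`λ^{n₂(ω)n₁(η)}`, and the claim reduces to the identity of exponents
`(m₂ + n₂)(m₁ + n₁) - n₂m₁ = m₂n₁ + n₁n₂ + m₁m₂`.
-/

open ComplexConjugate

theorem Complex.conj_zpow_of_norm_eq_one {z : ℂ} (hz : ‖z‖ = 1) (k : ℤ) :
    conj (z ^ k) = z ^ (-k) := by
  rw [map_zpow₀, ← Complex.inv_eq_conj hz, inv_zpow, zpow_neg]

/-- The deformed daggers on two-tensors are intertwined by `T_θ`: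
with `†_{1⊗_θ1}(ω⊗_θη) = λ^{n₁(η)n₂(η)}λ^{n₁(ω)n₂(ω)} η*⊗_θω*` on `Ω¹_θ⊗_θΩ¹_θ` and
`†_{2,θ}(ω⊗η) = λ^{(n₂(ω)+n₂(η))(n₁(ω)+n₁(η))} η*⊗ω*` on `(Ω¹⊗Ω¹)_θ`, one has
`†_{1⊗_θ1} = T_θ ∘ †_{2,θ} ∘ T_θ⁻¹` (stated on generators as
`T_θ(†_{2,θ}(ω⊗η)) = †_{1⊗_θ1}(T_θ(ω⊗η))`). -/
theorem stmt_17 {Ω T Tθ : Type*}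
    [AddCommGroup Ω] [Module ℂ Ω] [AddCommGroup T] [Module ℂ T] [AddCommGroup Tθ] [Module ℂ Tθ]
    (l : ℂ) (hl : ‖l‖ = 1)
    (Gr : ℤ × ℤ → Submodule ℂ Ω)
    (starΩ : Ω → Ω)
    (hstarGr : ∀ n : ℤ × ℤ, ∀ ω ∈ Gr n, starΩ ω ∈ Gr (-n))
    (t : Ω → Ω → T) (tθ : Ω → Ω → Tθ)
    (Tmap : T → Tθ)
    (hTmap_s : ∀ (c : ℂ) (v : T), Tmap (c • v) = c • Tmap v)
    (hTmap_t : ∀ (m n : ℤ × ℤ) (ω η : Ω), ω ∈ Gr m → η ∈ Gr n →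
      Tmap (t ω η) = l ^ (-(m.2 * n.1)) • tθ ω η)
    (dag2θ : T → T)
    (hdag2θ_t : ∀ (m n : ℤ × ℤ) (ω η : Ω), ω ∈ Gr m → η ∈ Gr n →
      dag2θ (t ω η) = l ^ ((m.2 + n.2) * (m.1 + n.1)) • t (starΩ η) (starΩ ω))
    (dag1θ : Tθ → Tθ)
    (hdag1θ_s : ∀ (c : ℂ) (v : Tθ), dag1θ (c • v) = (starRingEnd ℂ) c • dag1θ v)
    (hdag1θ_t : ∀ (m n : ℤ × ℤ) (ω η : Ω), ω ∈ Gr m → η ∈ Gr n →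
      dag1θ (tθ ω η) = l ^ (n.1 * n.2) • l ^ (m.1 * m.2) • tθ (starΩ η) (starΩ ω)) :
    ∀ (m n : ℤ × ℤ) (ω η : Ω), ω ∈ Gr m → η ∈ Gr n →
      Tmap (dag2θ (t ω η)) = dag1θ (Tmap (t ω η)) := by
  intro m n ω η hω hη
  have hl₀ : l ≠ 0 := norm_ne_zero_iff.mp (hl ▸ one_ne_zero)
  have lhs : Tmap (dag2θ (t ω η)) =
      l ^ ((m.2 + n.2) * (m.1 + n.1) - n.2 * m.1) • tθ (starΩ η) (starΩ ω) := by
    rw [hdag2θ_t m n ω η hω hη, hTmap_s,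
      hTmap_t (-n) (-m) _ _ (hstarGr n η hη) (hstarGr m ω hω), smul_smul, ← zpow_add₀ hl₀]
    simp only [Prod.snd_neg, Prod.fst_neg, neg_mul_neg, sub_eq_add_neg]
  have rhs : dag1θ (Tmap (t ω η)) =
      l ^ (m.2 * n.1 + n.1 * n.2 + m.1 * m.2) • tθ (starΩ η) (starΩ ω) := by
    rw [hTmap_t m n ω η hω hη, hdag1θ_s, Complex.conj_zpow_of_norm_eq_one hl, neg_neg,
      hdag1θ_t m n ω η hω hη, smul_smul, smul_smul, ← zpow_add₀ hl₀, ← zpow_add₀ hl₀, add_assoc]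
  rw [lhs, rhs]
  congr 2
  ring
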